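/- Let ℓ = {i, j, i*j} be a Fano line with i ≺ j (meaning eᵢeⱼ = e_{i*j}) and k ∉ ℓ. Then the Lie bracket of derivations satisfies [E_i^{ℓ,k}, E_j^{ℓ,k}] = E_{i*j}^{ℓ,k} and [F_i^ℓ, F_j^ℓ] = F_{i*j}^ℓ. -/

import Mathlib

noncomputable section

/-- Offset function for the octonion multiplication table: for distinct indices
`i, j` (in `ZMod 7`) with `d = j - i`, `eᵢ eⱼ = ± e_{i + octOff d}`.
It encodes the rules `eᵢe_{i+1} = e_{i+3}`, `e_{i+1}e_{i+3} = eᵢ`,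
`e_{i+3}eᵢ = e_{i+1}` (indices modulo 7). -/
def octOff : ZMod 7 → ZMod 7 := fun d =>
  if d = 1 then 3 else if d = 2 then 6 else if d = 3 then 1
  else if d = 4 then 5 else if d = 5 then 4 else if d = 6 then 2 else 0

/-- Sign in `eᵢ eⱼ = octSgn (j - i) • e_{i*j}` for distinct `i, j`. -/
def octSgn : ZMod 7 → ℝ := fun d => if d = 1 ∨ d = 2 ∨ d = 4 then 1 else -1

/-- The real octonion division algebra: a scalar part and seven imaginary
coordinates (indexed by `ZMod 7`; index `i` stands for the unit `eᵢ`,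
with `e₀ = e₇`). -/
def Oct : Type := ℝ × (ZMod 7 → ℝ)

instance : AddCommGroup Oct := inferInstanceAs (AddCommGroup (ℝ × (ZMod 7 → ℝ)))
instance : Module ℝ Oct := inferInstanceAs (Module ℝ (ℝ × (ZMod 7 → ℝ)))

/-- View an octonion as a pair. -/
def oc (x : Oct) : ℝ × (ZMod 7 → ℝ) := x
/-- Build an octonion from a pair. -/
def om (p : ℝ × (ZMod 7 → ℝ)) : Oct := p

/-- The octonion multiplication: `e₀ = 1` is the unit, `eᵢ² = -1` and
`eᵢe_{i+1} = e_{i+3} = -e_{i+1}eᵢ` for the imaginary units (indices mod 7). -/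
instance : Mul Oct :=
  ⟨fun x y => om
    ((oc x).1 * (oc y).1 - ∑ i : ZMod 7, (oc x).2 i * (oc y).2 i,
     fun k => (oc x).1 * (oc y).2 k + (oc y).1 * (oc x).2 k +
       ∑ i : ZMod 7, ∑ j : ZMod 7,
         (if i ≠ j ∧ k = i + octOff (j - i) then octSgn (j - i) else 0)
           * (oc x).2 i * (oc y).2 j)⟩

instance : One Oct := ⟨om (1, 0)⟩

/-- The imaginary basis units `eᵢ`, `i ∈ ZMod 7` (`e₀ = e₇`). -/
def e (i : ZMod 7) : Oct := om (0, Pi.single i 1)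

/-- For distinct `i, j`, `idx i j = i*j` is the index with `gᵢ + gⱼ = g_{i*j}`,
i.e. `eᵢeⱼ = ± e_{idx i j}`. -/
def idx (i j : ZMod 7) : ZMod 7 := i + octOff (j - i)

/-- A linear endomorphism of the octonions is a derivation. -/
def IsOctDer (d : Oct →ₗ[ℝ] Oct) : Prop := ∀ x y : Oct, d (x * y) = d x * y + x * d y

/-- The quaternion subalgebra `Q_ℓ = ⟨1, eᵢ, eⱼ, e_{i*j}⟩` attached to the
Fano line `ℓ = {i, j, i*j}`. -/
def Qline (i j : ZMod 7) : Submodule ℝ Oct :=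
  Submodule.span ℝ ({1, e i, e j, e (idx i j)} : Set Oct)

/-- `isE i k Q E` says that `E = E_i^{ℓ,k}` : `E(q) = 0` and
`E(q·e_k) = (1/2)(eᵢq)e_k` for all `q ∈ Q = Q_ℓ`. -/
def isE (i k : ZMod 7) (Q : Submodule ℝ Oct) (E : Oct →ₗ[ℝ] Oct) : Prop :=
  ∀ q ∈ Q, E q = 0 ∧ E (q * e k) = (1/2 : ℝ) • ((e i * q) * e k)

/-- `isF i k Q F` says that `F = F_i^{ℓ,k}` : `F(q) = (1/2)[eᵢ, q]` and
`F(q·e_k) = −(1/2)(q·eᵢ)e_k` for all `q ∈ Q = Q_ℓ`. -/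
def isF (i k : ZMod 7) (Q : Submodule ℝ Oct) (F : Oct →ₗ[ℝ] Oct) : Prop :=
  ∀ q ∈ Q, F q = (1/2 : ℝ) • (e i * q - q * e i) ∧
    F (q * e k) = -((1/2 : ℝ) • ((q * e i) * e k))

end

/-! For `i ≺ j` the units `eᵢ, eⱼ, e_{i*j}` multiply like Hamilton's `i, j, k`, so `Q_ℓ` is the
image of a multiplicative embedding of `ℍ`; in particular `Q_ℓ` is associative and
`eᵢeⱼ - eⱼeᵢ = 2e_{i*j}`. Since `k ∉ ℓ`, the lines through `k` and the points of `ℓ` cover the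
Fano plane, so `𝕆 = Q_ℓ + Q_ℓ e_k` and a linear map is determined by its values on `Q_ℓ` and on
`Q_ℓ e_k`. There both brackets are computed inside `ℍ`: on `Q_ℓ e_k` they reduce to
`(eᵢeⱼ - eⱼeᵢ)q` and `q(eⱼeᵢ - eᵢeⱼ)`, and `[F_i, F_j]` on `Q_ℓ` to the Jacobi identity
`[eᵢ, [eⱼ, q]] - [eⱼ, [eᵢ, q]] = [[eᵢ, eⱼ], q]`. -/

noncomputable section

namespace Oct

open Quaternion

variable {i j k : ZMod 7}

@[ext] lemma ext {x y : Oct} (h1 : x.1 = y.1) (h2 : ∀ t, x.2 t = y.2 t) : x = y :=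
  Prod.ext h1 (funext h2)

@[simp] lemma one_fst : (1 : Oct).1 = 1 := rfl
@[simp] lemma one_snd (t : ZMod 7) : (1 : Oct).2 t = 0 := rfl
@[simp] lemma zero_fst : (0 : Oct).1 = 0 := rfl
@[simp] lemma zero_snd (t : ZMod 7) : (0 : Oct).2 t = 0 := rfl
@[simp] lemma smul_fst (c : ℝ) (x : Oct) : (c • x).1 = c * x.1 := rfl
@[simp] lemma smul_snd (c : ℝ) (x : Oct) (t : ZMod 7) : (c • x).2 t = c * x.2 t := rfl
@[simp] lemma neg_fst (x : Oct) : (-x).1 = -x.1 := rfl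
@[simp] lemma neg_snd (x : Oct) (t : ZMod 7) : (-x).2 t = -x.2 t := rfl
@[simp] lemma add_fst (x y : Oct) : (x + y).1 = x.1 + y.1 := rfl
@[simp] lemma add_snd (x y : Oct) (t : ZMod 7) : (x + y).2 t = x.2 t + y.2 t := rfl
@[simp] lemma e_fst (a : ZMod 7) : (e a).1 = 0 := rfl
@[simp] lemma e_snd (a t : ZMod 7) : (e a).2 t = if t = a then 1 else 0 := by
  simp [e, om, Pi.single_apply]
@[simp] lemma mul_fst (x y : Oct) :
    (x * y).1 = x.1 * y.1 - ∑ i : ZMod 7, x.2 i * y.2 i := rfl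
@[simp] lemma mul_snd (x y : Oct) (t : ZMod 7) :
    (x * y).2 t = x.1 * y.2 t + y.1 * x.2 t +
      ∑ i : ZMod 7, ∑ j : ZMod 7,
        (if i ≠ j ∧ t = i + octOff (j - i) then octSgn (j - i) else 0) * x.2 i * y.2 j := rfl

lemma fst_sum {α : Type*} (s : Finset α) (f : α → Oct) : (∑ a ∈ s, f a).1 = ∑ a ∈ s, (f a).1 :=
  Prod.fst_sum ..

lemma snd_sum {α : Type*} (s : Finset α) (f : α → Oct) (t : ZMod 7) :
    (∑ a ∈ s, f a).2 t = ∑ a ∈ s, (f a).2 t := by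
  rw [← Finset.sum_apply]
  exact congrFun (Prod.snd_sum ..) t

lemma eq_smul_one_add_sum (x : Oct) : x = x.1 • (1 : Oct) + ∑ t : ZMod 7, x.2 t • e t := by
  ext u <;> simp [fst_sum, snd_sum]

-- Local: as global instances they would change how `*` on `Oct` elaborates after this section.
local instance : NonUnitalNonAssocRing Oct :=
  { (inferInstance : AddCommGroup Oct) with
    mul := (· * ·)
    left_distrib := fun x y z => by
      ext <;> simp [mul_add, Finset.sum_add_distrib] <;> ring
    right_distrib := fun x y z => by
      ext <;> simp [add_mul, mul_add, Finset.sum_add_distrib] <;> ring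
    zero_mul := fun x => by ext <;> simp
    mul_zero := fun x => by ext <;> simp }

local instance : MulOneClass Oct where
  one_mul x := by ext <;> simp
  mul_one x := by ext <;> simp

local instance : IsScalarTower ℝ Oct Oct where
  smul_assoc c x y := by
    ext <;> simp [Finset.mul_sum, mul_add, mul_sub, mul_assoc, mul_left_comm]

local instance : SMulCommClass ℝ Oct Oct where
  smul_comm c x y := by
    ext <;> simp [Finset.mul_sum, mul_add, mul_sub, mul_assoc, mul_left_comm]

/-- `Precedes i j` is the relation `i ≺ j`, i.e. `eᵢeⱼ = e_{i*j}`. -/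
def Precedes (i j : ZMod 7) : Prop := j - i = 1 ∨ j - i = 2 ∨ j - i = 4

instance : DecidableRel Precedes := fun i j => by unfold Precedes; infer_instance

lemma octSgn_sub (i j : ZMod 7) : octSgn (j - i) = if Precedes i j then 1 else -1 := rfl

lemma idx_comm (i j : ZMod 7) : idx i j = idx j i := by
  revert i j; decide

namespace Precedes

lemma ne (h : Precedes i j) : i ≠ j := by
  revert h; revert i j; decide

lemma not_precedes_symm (h : Precedes i j) : ¬Precedes j i := by
  revert h; revert i j; decide

lemma cycle (h : Precedes i j) : Precedes j (idx i j) ∧ idx j (idx i j) = i := by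
  revert h; revert i j; decide

/-- The seven points of the Fano plane are those of `ℓ`, the point `k`, and the third points of
the three lines joining `k` to `ℓ`. -/
lemma mem_of_notMem_line (h : Precedes i j) (hk : k ∉ ({i, j, idx i j} : Set (ZMod 7)))
    (t : ZMod 7) :
    t ∈ ({i, j, idx i j, k, idx i k, idx j k, idx (idx i j) k} : Set (ZMod 7)) := by
  simp only [Set.mem_insert_iff, Set.mem_singleton_iff, not_or] at hk ⊢
  revert h hk t; revert i j k; decide

end Precedes

lemma e_mul_self (a : ZMod 7) : e a * e a = -1 := by
  ext t
  · simp
  · simp only [mul_snd, e_snd, mul_ite, ite_and, mul_zero, mul_one, neg_snd, one_snd, neg_zero]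
    rw [Finset.sum_eq_single a] <;> simp +contextual

lemma e_mul_e (h : i ≠ j) : e i * e j = octSgn (j - i) • e (idx i j) := by
  ext t
  · simp [Ne.symm h]
  · simp only [mul_snd, e_snd, smul_snd, e_fst, mul_ite, ite_and, mul_zero, mul_one, idx]
    rw [Finset.sum_eq_single i]
    · rw [Finset.sum_eq_single j]
      · simp [h]
      · intro c _ hc; simp [hc]
      · simp
    · intro c _ hc
      rw [Finset.sum_eq_single j] <;> simp +contextual [hc]
    · simp

lemma e_idx_eq_smul (h : i ≠ j) : e (idx i j) = octSgn (j - i) • (e i * e j) := by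
  rw [e_mul_e h, smul_smul, octSgn]
  split_ifs <;> norm_num

lemma Precedes.e_mul_e (h : Precedes i j) : e i * e j = e (idx i j) := by
  rw [Oct.e_mul_e h.ne, octSgn_sub, if_pos h, one_smul]

lemma Precedes.e_mul_e_rev (h : Precedes i j) : e j * e i = -e (idx i j) := by
  rw [Oct.e_mul_e h.ne.symm, octSgn_sub, if_neg h.not_precedes_symm, neg_one_smul, idx_comm]

lemma precedes_of_e_mul_e (hij : i ≠ j) (h : e i * e j = e (idx i j)) : Precedes i j := by
  by_contra hn
  rw [e_mul_e hij, octSgn_sub, if_neg hn, neg_one_smul] at h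
  have := congrArg (fun x : Oct => x.2 (idx i j)) h
  norm_num at this

lemma one_mem_Qline : (1 : Oct) ∈ Qline i j := Submodule.subset_span (by simp)
lemma e_left_mem_Qline : e i ∈ Qline i j := Submodule.subset_span (by simp)
lemma e_right_mem_Qline : e j ∈ Qline i j := Submodule.subset_span (by simp)
lemma e_idx_mem_Qline : e (idx i j) ∈ Qline i j := Submodule.subset_span (by simp)

def quatEmbed (i j : ZMod 7) : ℍ[ℝ] →ₗ[ℝ] Oct :=
  (QuaternionAlgebra.reₗ _ _ _).smulRight 1 + (QuaternionAlgebra.imIₗ _ _ _).smulRight (e i) +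
    (QuaternionAlgebra.imJₗ _ _ _).smulRight (e j) +
    (QuaternionAlgebra.imKₗ _ _ _).smulRight (e (idx i j))

lemma quatEmbed_apply (x : ℍ[ℝ]) :
    quatEmbed i j x = x.re • 1 + x.imI • e i + x.imJ • e j + x.imK • e (idx i j) := rfl

lemma quatEmbed_mul (h : Precedes i j) (x y : ℍ[ℝ]) :
    quatEmbed i j (x * y) = quatEmbed i j x * quatEmbed i j y := by
  obtain ⟨hjm, hi⟩ := h.cycle
  obtain ⟨hmi, hj⟩ := hjm.cycle
  rw [hi] at hmi hj
  simp only [quatEmbed_apply, Quaternion.re_mul, Quaternion.imI_mul, Quaternion.imJ_mul,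
    Quaternion.imK_mul, add_mul, mul_add, smul_mul_assoc, mul_smul_comm, one_mul, mul_one,
    e_mul_self, h.e_mul_e, hjm.e_mul_e, hmi.e_mul_e, h.e_mul_e_rev, hjm.e_mul_e_rev,
    hmi.e_mul_e_rev, hi, hj]
  module

abbrev quatBasis : QuaternionAlgebra.Basis ℍ[ℝ] (-1 : ℝ) 0 (-1) :=
  QuaternionAlgebra.Basis.self (c₁ := -1) (c₂ := 0) (c₃ := -1) ℝ

lemma quatBasis_i_mul_j_sub :
    quatBasis.i * quatBasis.j - quatBasis.j * quatBasis.i = (2 : ℝ) • quatBasis.k := by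
  simp only [QuaternionAlgebra.Basis.i_mul_j, QuaternionAlgebra.Basis.j_mul_i, zero_smul,
    zero_sub, sub_neg_eq_add, two_smul]

lemma quatEmbed_i (i j : ZMod 7) : quatEmbed i j quatBasis.i = e i := by
  rw [quatEmbed_apply]; simp

lemma quatEmbed_j (i j : ZMod 7) : quatEmbed i j quatBasis.j = e j := by
  rw [quatEmbed_apply]; simp

lemma quatEmbed_k (i j : ZMod 7) : quatEmbed i j quatBasis.k = e (idx i j) := by
  rw [quatEmbed_apply]; simp

lemma range_quatEmbed (i j : ZMod 7) : LinearMap.range (quatEmbed i j) = Qline i j := by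
  apply le_antisymm
  · rintro _ ⟨x, rfl⟩
    rw [quatEmbed_apply]
    exact add_mem (add_mem (add_mem (Submodule.smul_mem _ _ one_mem_Qline)
      (Submodule.smul_mem _ _ e_left_mem_Qline)) (Submodule.smul_mem _ _ e_right_mem_Qline))
      (Submodule.smul_mem _ _ e_idx_mem_Qline)
  · refine Submodule.span_le.2 ?_
    rintro _ (rfl | rfl | rfl | rfl)
    · exact ⟨1, by simp [quatEmbed_apply]⟩
    · exact ⟨_, quatEmbed_i i j⟩
    · exact ⟨_, quatEmbed_j i j⟩
    · exact ⟨_, quatEmbed_k i j⟩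

lemma mul_mem_Qline (h : Precedes i j) {a b : Oct} (ha : a ∈ Qline i j) (hb : b ∈ Qline i j) :
    a * b ∈ Qline i j := by
  rw [← range_quatEmbed] at ha hb ⊢
  obtain ⟨x, rfl⟩ := ha
  obtain ⟨y, rfl⟩ := hb
  exact ⟨x * y, quatEmbed_mul h x y⟩

lemma e_mul_e_mul_sub (h : Precedes i j) {q : Oct} (hq : q ∈ Qline i j) :
    e i * (e j * q) - e j * (e i * q) = (2 : ℝ) • (e (idx i j) * q) := by
  rw [← range_quatEmbed] at hq
  obtain ⟨x, rfl⟩ := hq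
  rw [← quatEmbed_i i j, ← quatEmbed_j i j, ← quatEmbed_k i j]
  simp only [← quatEmbed_mul h, ← map_sub, ← map_smul]
  rw [← mul_assoc, ← mul_assoc, ← sub_mul, quatBasis_i_mul_j_sub, smul_mul_assoc]

lemma mul_e_mul_e_sub (h : Precedes i j) {q : Oct} (hq : q ∈ Qline i j) :
    q * e j * e i - q * e i * e j = -((2 : ℝ) • (q * e (idx i j))) := by
  rw [← range_quatEmbed] at hq
  obtain ⟨x, rfl⟩ := hq
  rw [← quatEmbed_i i j, ← quatEmbed_j i j, ← quatEmbed_k i j]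
  simp only [← quatEmbed_mul h, ← map_sub, ← map_smul, ← map_neg]
  rw [mul_assoc, mul_assoc, ← mul_sub, ← neg_sub, quatBasis_i_mul_j_sub, mul_neg, mul_smul_comm]

lemma commutator_e_commutator_sub (h : Precedes i j) {q : Oct} (hq : q ∈ Qline i j) :
    e i * (e j * q - q * e j) - (e j * q - q * e j) * e i
      - (e j * (e i * q - q * e i) - (e i * q - q * e i) * e j) =
      (2 : ℝ) • (e (idx i j) * q - q * e (idx i j)) := by
  rw [← range_quatEmbed] at hq
  obtain ⟨x, rfl⟩ := hq
  rw [← quatEmbed_i i j, ← quatEmbed_j i j, ← quatEmbed_k i j]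
  simp only [← quatEmbed_mul h, ← map_sub, ← map_smul]
  congr 1
  calc _ = (quatBasis.i * quatBasis.j - quatBasis.j * quatBasis.i) * x
        - x * (quatBasis.i * quatBasis.j - quatBasis.j * quatBasis.i) := by noncomm_ring
    _ = _ := by rw [quatBasis_i_mul_j_sub, smul_mul_assoc, mul_smul_comm, smul_sub]

lemma Qline_sup_map_mulRight_eq_top (h : Precedes i j)
    (hk : k ∉ ({i, j, idx i j} : Set (ZMod 7))) :
    Qline i j ⊔ (Qline i j).map (LinearMap.mulRight ℝ (e k)) = ⊤ := by
  set S := Qline i j ⊔ (Qline i j).map (LinearMap.mulRight ℝ (e k))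
  have hQ : Qline i j ≤ S := le_sup_left
  have hQk {q : Oct} (hq : q ∈ Qline i j) : q * e k ∈ S :=
    Submodule.mem_sup_right (Submodule.mem_map_of_mem hq)
  have he_idx {a : ZMod 7} (ha : e a ∈ Qline i j) (hak : a ≠ k) : e (idx a k) ∈ S := by
    rw [e_idx_eq_smul hak]
    exact S.smul_mem _ (hQk ha)
  have he (t : ZMod 7) : e t ∈ S := by
    have ht := h.mem_of_notMem_line hk t
    simp only [Set.mem_insert_iff, Set.mem_singleton_iff] at hk ht
    rcases ht with rfl | rfl | rfl | rfl | rfl | rfl | rfl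
    · exact hQ e_left_mem_Qline
    · exact hQ e_right_mem_Qline
    · exact hQ e_idx_mem_Qline
    · simpa using hQk one_mem_Qline
    · exact he_idx e_left_mem_Qline (by tauto)
    · exact he_idx e_right_mem_Qline (by tauto)
    · exact he_idx e_idx_mem_Qline (by tauto)
  refine eq_top_iff.2 fun x _ => ?_
  rw [eq_smul_one_add_sum x]
  exact add_mem (S.smul_mem _ (hQ one_mem_Qline)) (S.sum_mem fun t _ => S.smul_mem _ (he t))

lemma linearMap_ext_of_Qline (h : Precedes i j) (hk : k ∉ ({i, j, idx i j} : Set (ZMod 7)))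
    {f g : Oct →ₗ[ℝ] Oct} (hQ : ∀ q ∈ Qline i j, f q = g q)
    (hQk : ∀ q ∈ Qline i j, f (q * e k) = g (q * e k)) : f = g := by
  have hle : Qline i j ⊔ (Qline i j).map (LinearMap.mulRight ℝ (e k)) ≤ LinearMap.eqLocus f g :=
    sup_le hQ (Submodule.map_le_iff_le_comap.2 hQk)
  rwa [Qline_sup_map_mulRight_eq_top h hk, top_le_iff, LinearMap.eqLocus_eq_top] at hle

lemma isE_comp_sub_comp (h : Precedes i j) (hk : k ∉ ({i, j, idx i j} : Set (ZMod 7)))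
    {Ei Ej Em : Oct →ₗ[ℝ] Oct} (hEi : isE i k (Qline i j) Ei) (hEj : isE j k (Qline i j) Ej)
    (hEm : isE (idx i j) k (Qline i j) Em) : Ei ∘ₗ Ej - Ej ∘ₗ Ei = Em := by
  refine linearMap_ext_of_Qline h hk (fun q hq => ?_) (fun q hq => ?_)
  · simp [(hEi q hq).1, (hEj q hq).1, (hEm q hq).1]
  · have hjq := mul_mem_Qline h e_right_mem_Qline hq
    have hiq := mul_mem_Qline h e_left_mem_Qline hq
    have key : e i * (e j * q) * e k - e j * (e i * q) * e k =
        (2 : ℝ) • (e (idx i j) * q * e k) := by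
      rw [← sub_mul, e_mul_e_mul_sub h hq, smul_mul_assoc]
    rw [LinearMap.sub_apply, LinearMap.comp_apply, LinearMap.comp_apply, (hEj q hq).2,
      (hEi q hq).2, map_smul, map_smul, (hEi _ hjq).2, (hEj _ hiq).2, (hEm q hq).2]
    linear_combination (norm := module) (1 / 4 : ℝ) • key

lemma isF_comp_sub_comp (h : Precedes i j) (hk : k ∉ ({i, j, idx i j} : Set (ZMod 7)))
    {Fi Fj Fm : Oct →ₗ[ℝ] Oct} (hFi : isF i k (Qline i j) Fi) (hFj : isF j k (Qline i j) Fj)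
    (hFm : isF (idx i j) k (Qline i j) Fm) : Fi ∘ₗ Fj - Fj ∘ₗ Fi = Fm := by
  have hi : e i ∈ Qline i j := e_left_mem_Qline
  have hj : e j ∈ Qline i j := e_right_mem_Qline
  refine linearMap_ext_of_Qline h hk (fun q hq => ?_) (fun q hq => ?_)
  · have hcj : e j * q - q * e j ∈ Qline i j :=
      sub_mem (mul_mem_Qline h hj hq) (mul_mem_Qline h hq hj)
    have hci : e i * q - q * e i ∈ Qline i j :=
      sub_mem (mul_mem_Qline h hi hq) (mul_mem_Qline h hq hi)
    rw [LinearMap.sub_apply, LinearMap.comp_apply, LinearMap.comp_apply, (hFj q hq).1,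
      (hFi q hq).1, map_smul, map_smul, (hFi _ hcj).1, (hFj _ hci).1, (hFm q hq).1]
    linear_combination (norm := module) (1 / 4 : ℝ) • commutator_e_commutator_sub h hq
  · have hqj := mul_mem_Qline h hq hj
    have hqi := mul_mem_Qline h hq hi
    have key : q * e j * e i * e k - q * e i * e j * e k =
        -((2 : ℝ) • (q * e (idx i j) * e k)) := by
      rw [← sub_mul, mul_e_mul_e_sub h hq, neg_mul, smul_mul_assoc]
    rw [LinearMap.sub_apply, LinearMap.comp_apply, LinearMap.comp_apply, (hFj q hq).2,
      (hFi q hq).2, map_neg, map_neg, map_smul, map_smul, (hFi _ hqj).2, (hFj _ hqi).2,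
      (hFm q hq).2]
    linear_combination (norm := module) (1 / 4 : ℝ) • key

end Oct

end

open Oct

/-- for a Fano line `ℓ = {i, j, i*j}` with `i ≺ j`
(i.e. `eᵢeⱼ = e_{i*j}`) and `k ∉ ℓ`, the brackets of the derivations satisfy
`[E_i^{ℓ,k}, E_j^{ℓ,k}] = E_{i*j}^{ℓ,k}` and `[F_i^ℓ, F_j^ℓ] = F_{i*j}^ℓ`. -/
theorem stmt9 : ∀ i j k : ZMod 7, i ≠ j → e i * e j = e (idx i j) →
    k ∉ ({i, j, idx i j} : Set (ZMod 7)) →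
    ∀ Ei Ej Eij Fi Fj Fij : Oct →ₗ[ℝ] Oct,
      isE i k (Qline i j) Ei → isE j k (Qline i j) Ej →
      isE (idx i j) k (Qline i j) Eij →
      isF i k (Qline i j) Fi → isF j k (Qline i j) Fj →
      isF (idx i j) k (Qline i j) Fij →
      Ei ∘ₗ Ej - Ej ∘ₗ Ei = Eij ∧ Fi ∘ₗ Fj - Fj ∘ₗ Fi = Fij := by
  intro i j k hij hmul hk Ei Ej Eij Fi Fj Fij hEi hEj hEij hFi hFj hFij
  have h := precedes_of_e_mul_e hij hmul
  exact ⟨isE_comp_sub_comp h hk hEi hEj hEij, isF_comp_sub_comp h hk hFi hFj hFij⟩
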